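/- Let o, t, m, r be natural numbers with r ≤ min(o, t+m), and set p := min(o, t). Let R' be a real o×t matrix admitting a singular value decomposition R' = T₁*Σ*T₂ where T₁, T₂ are orthogonal, Σ is an o×t matrix with Σ i j = 0 for i ≠ j (as natural numbers), and the diagonal entries of Σ at positions 0, 1, …, p−1 are strictly decreasing and positive (so R' has p pairwise distinct positive singular values). For each natural number k with max(0, r−p) ≤ k ≤ r, let H_k be the set of all real o×(t⊕m) matrices W = fromColumns W' W'' such that: rank W = r, rank W' = r − k, Crit'(W') holds, and the column space of W'' is contained in the sum of the orthogonal complement of the column space of R' and the column space of W'. Then { W | rank W = r and Crit(W) } = ⋃_{k = max(0, r−p)}^{r} H_k. -/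

import Mathlib

open Matrix

/-- The column space of a real matrix `M`, i.e. the range of `x ↦ M.mulVec x`. -/
def colSpace {a b : Type*} [Fintype b] (M : Matrix a b ℝ) : Submodule ℝ (a → ℝ) :=
  LinearMap.range M.mulVecLin

/-- The row space of a real matrix `M`, i.e. the column space of `Mᵀ`. -/
def rowSpace {a b : Type*} [Fintype a] (M : Matrix a b ℝ) : Submodule ℝ (b → ℝ) :=
  colSpace Mᵀ

/-- The orthogonal complement of a subspace of `ℝ^a` with respect to the dot product. -/
def dotOrth {a : Type*} [Fintype a] (S : Submodule ℝ (a → ℝ)) : Submodule ℝ (a → ℝ) where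
  carrier := { v | ∀ x ∈ S, x ⬝ᵥ v = 0 }
  add_mem' := by
    intro v w hv hw x hx
    simp only [Set.mem_setOf_eq] at *
    rw [dotProduct_add, hv x hx, hw x hx, add_zero]
  zero_mem' := by
    intro x hx
    simp
  smul_mem' := by
    intro c v hv x hx
    simp only [Set.mem_setOf_eq] at *
    rw [dotProduct_smul, hv x hx, smul_zero]

/-- Criticality of `Y` for the Frobenius distance to `R'` on the determinantal variety:
`Y − R'` is trace-orthogonal to the tangent space `ℝ^o ⊗ rowspace(Y) + colspace(Y) ⊗ ℝ^t`. -/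
def Crit' {o t : ℕ} (R' Y : Matrix (Fin o) (Fin t) ℝ) : Prop :=
  ∀ N' : Matrix (Fin o) (Fin t) ℝ,
    (∃ N'₁ N'₂, N' = N'₁ + N'₂ ∧ rowSpace N'₁ ≤ rowSpace Y ∧ colSpace N'₂ ≤ colSpace Y) →
    ((Y - R') * N'ᵀ).trace = 0

/-- Criticality of `W` for the seminorm distance `‖· − R‖²_{ΠΠᵀ}` on the determinantal
variety, where `R = (R' | 0)` and `Π = fromBlocks 1 0 0 0`. -/
def Crit {o t m : ℕ} (R' : Matrix (Fin o) (Fin t) ℝ)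
    (W : Matrix (Fin o) (Fin t ⊕ Fin m) ℝ) : Prop :=
  ∀ N : Matrix (Fin o) (Fin t ⊕ Fin m) ℝ,
    (∃ N₁ N₂, N = N₁ + N₂ ∧ rowSpace N₁ ≤ rowSpace W ∧ colSpace N₂ ≤ colSpace W) →
    ((W - Matrix.fromCols R' (0 : Matrix (Fin o) (Fin m) ℝ)) *
        (Matrix.fromBlocks (1 : Matrix (Fin t) (Fin t) ℝ) 0 0
          (0 : Matrix (Fin m) (Fin m) ℝ)) * Nᵀ).trace = 0

/-- The component `H_k` of the critical locus: block matrices `W = (W' | W'')` of rank `r`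
whose left block `W'` has rank `r − k` and is a critical rank-`(r−k)` approximation of `R'`,
and whose right block has column space inside `cspan(R')^⊥ ⊕ cspan(W')`. -/
def Hset {o t m : ℕ} (R' : Matrix (Fin o) (Fin t) ℝ) (r k : ℕ) :
    Set (Matrix (Fin o) (Fin t ⊕ Fin m) ℝ) :=
  { W | ∃ (W' : Matrix (Fin o) (Fin t) ℝ) (W'' : Matrix (Fin o) (Fin m) ℝ),
      W = Matrix.fromCols W' W'' ∧ W.rank = r ∧ W'.rank = r - k ∧ Crit' R' W' ∧
      colSpace W'' ≤ dotOrth (colSpace R') ⊔ colSpace W' }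

/-!
Write `D = W' − R'`. Testing the criticality conditions against `N = (M Wᵀ) W` and
`N = W (Wᵀ M)`, where `M` is the residual, shows that `Crit' R' W'` means `D W'ᵀ = 0` and
`W'ᵀ D = 0`, and that `Crit R' (W' | W'')` means these two equations together with `W''ᵀ D = 0`.
The first two make `W'` and `D` have orthogonal column and row spaces, and this forces
`cspan(D)^⊥ = cspan(R')^⊥ + cspan(W')`: a vector `v ⊥ cspan(D)` splits as `(v − W' y) + W' y`
with `W'ᵀ W' y = W'ᵀ v`. So `W''ᵀ D = 0` is exactly the column-space condition defining `H_k`,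
and `k = r − rank W'` lies in the stated range because `rank W' ≤ min(rank W, o, t)`.
-/

section ColSpace

variable {a b c : Type*}

lemma colSpace_zero [Fintype b] : colSpace (0 : Matrix a b ℝ) = ⊥ := by
  rw [colSpace, mulVecLin_zero, LinearMap.range_zero]

lemma colSpace_mul_le [Fintype b] [Fintype c] (A : Matrix a b ℝ) (B : Matrix b c ℝ) :
    colSpace (A * B) ≤ colSpace A := by
  rw [colSpace, colSpace, mulVecLin_mul]
  exact LinearMap.range_comp_le_range _ _

lemma rowSpace_mul_le [Fintype a] [Fintype b] (A : Matrix a b ℝ) (B : Matrix b c ℝ) :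
    rowSpace (A * B) ≤ rowSpace B := by
  rw [rowSpace, rowSpace, transpose_mul]
  exact colSpace_mul_le _ _

lemma colSpace_transpose_mul_self [Fintype a] [Fintype b] (A : Matrix a b ℝ) :
    colSpace (Aᵀ * A) = colSpace Aᵀ :=
  Submodule.eq_of_le_of_finrank_eq (colSpace_mul_le _ _)
    ((rank_transpose_mul_self A).trans (rank_transpose A).symm)

lemma exists_eq_mul_of_colSpace_le [Fintype b] [Fintype c] [DecidableEq c] {A : Matrix a c ℝ}
    {B : Matrix a b ℝ} (h : colSpace A ≤ colSpace B) : ∃ C : Matrix b c ℝ, A = B * C := by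
  choose f hf using fun j : c => h ⟨Pi.single j 1, rfl⟩
  refine ⟨Matrix.of fun i j => f j i, ?_⟩
  ext i j
  simpa [Matrix.mul_apply, mulVec, dotProduct, Pi.single_apply] using (congrFun (hf j) i).symm

lemma exists_eq_mul_of_rowSpace_le [Fintype a] [Fintype c] [DecidableEq a] {A : Matrix a b ℝ}
    {B : Matrix c b ℝ} (h : rowSpace A ≤ rowSpace B) : ∃ C : Matrix a c ℝ, A = C * B := by
  obtain ⟨C, hC⟩ := exists_eq_mul_of_colSpace_le h
  exact ⟨Cᵀ, by rw [← transpose_transpose A, hC, transpose_mul, transpose_transpose]⟩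

lemma mem_dotOrth_colSpace_iff [Fintype a] [Fintype b] {M : Matrix a b ℝ} {v : a → ℝ} :
    v ∈ dotOrth (colSpace M) ↔ Mᵀ *ᵥ v = 0 := by
  refine ⟨fun h => ?_, ?_⟩
  · have := h _ ⟨Mᵀ *ᵥ v, rfl⟩
    rwa [mulVecLin_apply, dotProduct_comm, dotProduct_mulVec, ← mulVec_transpose,
      dotProduct_self_eq_zero] at this
  · rintro h _ ⟨x, rfl⟩
    rw [mulVecLin_apply, ← vecMul_transpose, ← dotProduct_mulVec, h, dotProduct_zero]

lemma colSpace_le_dotOrth_colSpace_iff [Fintype a] [Fintype b] [Fintype c] {A : Matrix a c ℝ}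
    {B : Matrix a b ℝ} : colSpace A ≤ dotOrth (colSpace B) ↔ Bᵀ * A = 0 := by
  refine ⟨fun h => ext_iff_mulVec.mpr fun x => ?_, ?_⟩
  · rw [zero_mulVec, ← mulVec_mulVec]
    exact mem_dotOrth_colSpace_iff.mp (h ⟨x, rfl⟩)
  · rintro h _ ⟨x, rfl⟩
    rw [mem_dotOrth_colSpace_iff, mulVecLin_apply, mulVec_mulVec, h, zero_mulVec]

theorem dotOrth_colSpace_sub [Fintype a] [Fintype b] {R W : Matrix a b ℝ}
    (h₁ : (W - R) * Wᵀ = 0) (h₂ : Wᵀ * (W - R) = 0) :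
    dotOrth (colSpace (W - R)) = dotOrth (colSpace R) ⊔ colSpace W := by
  have hRW : Rᵀ * W = Wᵀ * W := by
    have := congrArg transpose h₂
    rw [transpose_mul, transpose_transpose, transpose_zero, transpose_sub, Matrix.sub_mul,
      sub_eq_zero] at this
    exact this.symm
  have hWR : W * Rᵀ = W * Wᵀ := by
    have := congrArg transpose h₁
    rw [transpose_mul, transpose_transpose, transpose_zero, transpose_sub, Matrix.mul_sub,
      sub_eq_zero] at this
    exact this.symm
  ext v
  rw [mem_dotOrth_colSpace_iff, transpose_sub, sub_mulVec, sub_eq_zero]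
  constructor
  · intro hv
    obtain ⟨y, hy⟩ : Wᵀ *ᵥ v ∈ colSpace (Wᵀ * W) := by
      rw [colSpace_transpose_mul_self]
      exact ⟨v, rfl⟩
    refine Submodule.mem_sup.mpr ⟨v - W *ᵥ y, ?_, W *ᵥ y, ⟨y, rfl⟩, sub_add_cancel _ _⟩
    rw [mem_dotOrth_colSpace_iff, mulVec_sub, mulVec_mulVec, hRW, ← hv, ← hy, mulVecLin_apply,
      sub_self]
  · intro hv
    obtain ⟨u, hu, _, ⟨x, rfl⟩, rfl⟩ := Submodule.mem_sup.mp hv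
    rw [mem_dotOrth_colSpace_iff] at hu
    have hWu : Wᵀ *ᵥ u = 0 := by
      have : (Wᵀᵀ * Wᵀ) *ᵥ u = 0 := by
        rw [transpose_transpose, ← hWR, ← mulVec_mulVec, hu, mulVec_zero]
      exact (SetLike.ext_iff.mp (ker_mulVecLin_transpose_mul_self Wᵀ) u).mp this
    rw [mulVecLin_apply, mulVec_add, mulVec_add, mulVec_mulVec, mulVec_mulVec, hRW, hu, hWu]

end ColSpace

lemma rank_le_rank_fromCols_left {R a b c : Type*} [Field R] [Fintype b] [Fintype c]
    [DecidableEq b] (A : Matrix a b R) (B : Matrix a c R) : A.rank ≤ (fromCols A B).rank :=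
  calc A.rank = (fromCols A B * fromRows (1 : Matrix b b R) (0 : Matrix c b R)).rank := by
        rw [fromCols_mul_fromRows, Matrix.mul_one, Matrix.mul_zero, add_zero]
    _ ≤ (fromCols A B).rank := rank_mul_le_left _ _

def IsTangent {a b : Type*} [Fintype a] [Fintype b] (W N : Matrix a b ℝ) : Prop :=
  ∃ N₁ N₂, N = N₁ + N₂ ∧ rowSpace N₁ ≤ rowSpace W ∧ colSpace N₂ ≤ colSpace W

theorem forall_isTangent_trace_eq_zero_iff {a b : Type*} [Fintype a] [Fintype b]
    (M W : Matrix a b ℝ) :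
    (∀ N, IsTangent W N → (M * Nᵀ).trace = 0) ↔ M * Wᵀ = 0 ∧ Wᵀ * M = 0 := by
  classical
  constructor
  · intro h
    have hrow := h (M * Wᵀ * W)
      ⟨_, 0, (add_zero _).symm, rowSpace_mul_le _ _, by simp [colSpace_zero]⟩
    have hcol := h (W * (Wᵀ * M))
      ⟨0, _, (zero_add _).symm, by simp [rowSpace, colSpace_zero], colSpace_mul_le _ _⟩
    refine ⟨trace_mul_conjTranspose_self_eq_zero_iff.mp ?_,
      trace_mul_conjTranspose_self_eq_zero_iff.mp ?_⟩
    · simpa [Matrix.mul_assoc] using hrow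
    · rw [conjTranspose_eq_transpose_of_trivial, transpose_mul, transpose_transpose,
        Matrix.mul_assoc, trace_mul_comm]
      simpa [Matrix.mul_assoc] using hcol
  · rintro ⟨hMW, hWM⟩ N ⟨N₁, N₂, rfl, hr, hc⟩
    obtain ⟨C₁, rfl⟩ := exists_eq_mul_of_rowSpace_le hr
    obtain ⟨C₂, rfl⟩ := exists_eq_mul_of_colSpace_le hc
    rw [transpose_add, Matrix.mul_add, trace_add, transpose_mul, transpose_mul,
      ← Matrix.mul_assoc, hMW, Matrix.zero_mul, trace_zero, zero_add,
      trace_mul_comm, Matrix.mul_assoc, hWM, Matrix.mul_zero, trace_zero]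

section BlockCriticality

variable {o t m : ℕ}

lemma crit'_iff (R' Y : Matrix (Fin o) (Fin t) ℝ) :
    Crit' R' Y ↔ (Y - R') * Yᵀ = 0 ∧ Yᵀ * (Y - R') = 0 :=
  forall_isTangent_trace_eq_zero_iff _ _

lemma crit_fromCols_iff (R' W' : Matrix (Fin o) (Fin t) ℝ) (W'' : Matrix (Fin o) (Fin m) ℝ) :
    Crit R' (fromCols W' W'') ↔ Crit' R' W' ∧ W''ᵀ * (W' - R') = 0 := by
  have hresidual : (fromCols W' W'' - fromCols R' (0 : Matrix (Fin o) (Fin m) ℝ)) *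
      fromBlocks (1 : Matrix (Fin t) (Fin t) ℝ) 0 0 (0 : Matrix (Fin m) (Fin m) ℝ) =
      fromCols (W' - R') (0 : Matrix (Fin o) (Fin m) ℝ) := by
    rw [show fromCols W' W'' - fromCols R' 0 = fromCols (W' - R') W'' by
      ext i (j | j) <;> simp, fromCols_mul_fromBlocks]
    simp
  show (∀ N, IsTangent _ N → _) ↔ _
  rw [hresidual, forall_isTangent_trace_eq_zero_iff, crit'_iff, transpose_fromCols,
    fromCols_mul_fromRows, fromRows_mul, mul_fromCols, mul_fromCols, Matrix.zero_mul, add_zero,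
    Matrix.mul_zero, Matrix.mul_zero, ← fromRows_zero, fromRows_ext_iff, ← fromCols_zero,
    fromCols_ext_iff, ← fromCols_zero, fromCols_ext_iff]
  tauto

theorem crit_fromCols_iff_crit'_and_colSpace_le (R' W' : Matrix (Fin o) (Fin t) ℝ)
    (W'' : Matrix (Fin o) (Fin m) ℝ) :
    Crit R' (fromCols W' W'') ↔
      Crit' R' W' ∧ colSpace W'' ≤ dotOrth (colSpace R') ⊔ colSpace W' := by
  rw [crit_fromCols_iff]
  refine and_congr_right fun hW' => ?_
  obtain ⟨h₁, h₂⟩ := (crit'_iff R' W').mp hW'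
  rw [← dotOrth_colSpace_sub h₁ h₂, colSpace_le_dotOrth_colSpace_iff, ← transpose_eq_zero,
    transpose_mul, transpose_transpose]

lemma fromCols_mem_Hset_iff (R' W' : Matrix (Fin o) (Fin t) ℝ) (W'' : Matrix (Fin o) (Fin m) ℝ)
    (r k : ℕ) :
    fromCols W' W'' ∈ Hset R' r k ↔ (fromCols W' W'').rank = r ∧ W'.rank = r - k ∧
      Crit' R' W' ∧ colSpace W'' ≤ dotOrth (colSpace R') ⊔ colSpace W' := by
  refine ⟨?_, fun h => ⟨W', W'', rfl, h⟩⟩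
  rintro ⟨X, Y, hXY, h⟩
  obtain ⟨rfl, rfl⟩ := fromCols_inj hXY
  exact h

end BlockCriticality

theorem critical_points_determinantal_general (o t m r : ℕ) (R' : Matrix (Fin o) (Fin t) ℝ) :
    { W : Matrix (Fin o) (Fin t ⊕ Fin m) ℝ | W.rank = r ∧ Crit R' W } =
      ⋃ k ∈ Set.Icc (max 0 (r - min o t)) r, Hset (m := m) R' r k := by
  ext W
  obtain ⟨W', W'', rfl⟩ : ∃ W' W'', W = fromCols W' W'' := ⟨_, _, (fromCols_toCols W).symm⟩
  simp only [Set.mem_ofPred_eq, Set.mem_iUnion, Set.mem_Icc, exists_prop, fromCols_mem_Hset_iff,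
    crit_fromCols_iff_crit'_and_colSpace_le]
  constructor
  · rintro ⟨hrank, hcrit⟩
    have hle : W'.rank ≤ r := hrank ▸ rank_le_rank_fromCols_left W' W''
    have ho : W'.rank ≤ o := W'.rank_le_height
    have ht : W'.rank ≤ t := W'.rank_le_width
    exact ⟨r - W'.rank, ⟨by omega, by omega⟩, hrank, by omega, hcrit⟩
  · rintro ⟨k, -, hrank, -, hcrit⟩
    exact ⟨hrank, hcrit⟩

/-- Theorem 4.2 of the paper: for a matrix `R'` with pairwise distinct positive singular
values, the critical points of rank exactly `r` of the degenerate quadratic optimization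
on the determinantal variety are exactly `⋃_{k = max(0, r−p)}^{r} H_k`, with `p = min o t`. -/
theorem critical_points_determinantal (o t m r : ℕ) (hr : r ≤ min o (t + m))
    (R' : Matrix (Fin o) (Fin t) ℝ)
    (T₁ : Matrix (Fin o) (Fin o) ℝ) (hT₁ : T₁ * T₁ᵀ = 1)
    (T₂ : Matrix (Fin t) (Fin t) ℝ) (hT₂ : T₂ * T₂ᵀ = 1)
    (Sg : Matrix (Fin o) (Fin t) ℝ)
    (hdiag : ∀ (i : Fin o) (j : Fin t), (i : ℕ) ≠ (j : ℕ) → Sg i j = 0)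
    (hpos : ∀ (i : Fin o) (j : Fin t), (i : ℕ) = (j : ℕ) → 0 < Sg i j)
    (hdec : ∀ (i i' : Fin o) (j j' : Fin t), (i : ℕ) = (j : ℕ) → (i' : ℕ) = (j' : ℕ) →
      (i : ℕ) < (i' : ℕ) → Sg i' j' < Sg i j)
    (hSVD : R' = T₁ * Sg * T₂) :
    { W : Matrix (Fin o) (Fin t ⊕ Fin m) ℝ | W.rank = r ∧ Crit R' W } =
      ⋃ k ∈ Set.Icc (max 0 (r - min o t)) r, Hset (m := m) R' r k :=
  critical_points_determinantal_general o t m r R'
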